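/- Let λ be the algebra endomorphism of Z⟨a,b⟩ with λ(a) = 0 and λ(b) = b − a. Then for every u in Z⟨a,b⟩, u = λ(u) + Σ λ(u₍₁₎) · a · u₍₂₎, where Δ(u) = Σ u₍₁₎ ⊗ u₍₂₎ is the letter-deleting coproduct. -/

import Mathlib

/-!
On a word `x w` (with `x` a letter) the coproduct splits as `Δ(x w) = 1 ⊗ w + (x ⊗ 1) Δ(w)`, so
`F u = λ(u) + Σ λ(u₍₁₎) a u₍₂₎` (`lambdaExpansion`) satisfies `F(x w) = a w + λ(x) F(w)`.
Since `a + λ(x) = x` for both letters, induction on the word gives `F(w) = w`, and `F` is linear.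
-/

open scoped TensorProduct

noncomputable section

/-- `Z⟨a,b⟩`, the free associative `ℤ`-algebra on two noncommuting generators,
realized as the monoid algebra of the free monoid on two letters (letter `0` is `a`,
letter `1` is `b`). -/
abbrev FA := MonoidAlgebra ℤ (FreeMonoid (Fin 2))

def ofW (w : FreeMonoid (Fin 2)) : FA := MonoidAlgebra.of ℤ (FreeMonoid (Fin 2)) w

/-- The letter-deleting coproduct on a word: delete one letter and split there. -/
def deltaWord (w : FreeMonoid (Fin 2)) : FA ⊗[ℤ] FA :=
  ∑ i ∈ Finset.range w.length,
    ofW (FreeMonoid.ofList (w.toList.take i)) ⊗ₜ[ℤ]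
      ofW (FreeMonoid.ofList (w.toList.drop (i + 1)))

/-- The coproduct `Δ` on `Z⟨a,b⟩`, extended linearly from words. -/
def Delta : FA →ₗ[ℤ] FA ⊗[ℤ] FA :=
  (Finsupp.lsum ℤ fun w => LinearMap.toSpanSingleton ℤ _ (deltaWord w)) ∘ₗ
    (MonoidAlgebra.coeffLinearEquiv ℤ).toLinearMap


/-- The generator `a`. -/
def av : FA := ofW (FreeMonoid.of 0)
/-- The generator `b`. -/
def bv : FA := ofW (FreeMonoid.of 1)

/-- The algebra endomorphism `λ` of `Z⟨a,b⟩` with `λ(a) = 0` and `λ(b) = b - a`. -/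
def lambdaMap : FA →ₐ[ℤ] FA :=
  MonoidAlgebra.lift ℤ FA (FreeMonoid (Fin 2))
    (FreeMonoid.lift fun i => if i = 0 then 0 else bv - av)

section AlgebraLemmas

variable {R A : Type*} [CommSemiring R] [Semiring A] [Algebra R A]

lemma mul'_map_mulRight_comp_map_mulLeft (f : A →ₐ[R] A) (a c : A) (z : A ⊗[R] A) :
    LinearMap.mul' R A
        (TensorProduct.map (LinearMap.mulRight R a ∘ₗ f.toLinearMap) LinearMap.id
          (TensorProduct.map (LinearMap.mulLeft R c) LinearMap.id z)) =
      f c * LinearMap.mul' R A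
        (TensorProduct.map (LinearMap.mulRight R a ∘ₗ f.toLinearMap) LinearMap.id z) := by
  induction z using TensorProduct.induction_on with
  | zero => simp
  | tmul p q => simp [mul_assoc]
  | add p q hp hq => simp only [map_add, hp, hq, mul_add]

end AlgebraLemmas

lemma ofW_of_mul (x : Fin 2) (w : FreeMonoid (Fin 2)) :
    ofW (FreeMonoid.of x * w) = ofW (FreeMonoid.of x) * ofW w :=
  map_mul _ _ _

lemma Delta_ofW (w : FreeMonoid (Fin 2)) : Delta (ofW w) = deltaWord w := by
  simp [Delta, ofW]

lemma deltaWord_one : deltaWord 1 = 0 := by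
  simp [deltaWord]

lemma deltaWord_of_mul (x : Fin 2) (w : FreeMonoid (Fin 2)) :
    deltaWord (FreeMonoid.of x * w) =
      1 ⊗ₜ ofW w + TensorProduct.map (LinearMap.mulLeft ℤ (ofW (FreeMonoid.of x))) LinearMap.id
        (deltaWord w) := by
  rw [deltaWord, FreeMonoid.length_mul, FreeMonoid.length_of, add_comm, Finset.sum_range_succ',
    deltaWord, map_sum, add_comm]
  congr 1
  refine Finset.sum_congr rfl fun i _ => ?_
  simp only [FreeMonoid.toList_of_mul, List.take_succ_cons, List.drop_succ_cons,
    TensorProduct.map_tmul, LinearMap.mulLeft_apply, LinearMap.id_apply, ← ofW_of_mul]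
  rfl

lemma av_add_lambdaMap_of (x : Fin 2) :
    av + lambdaMap (ofW (FreeMonoid.of x)) = ofW (FreeMonoid.of x) := by
  fin_cases x <;> simp [lambdaMap, ofW, av, bv]

def lambdaExpansion : FA →ₗ[ℤ] FA :=
  lambdaMap.toLinearMap +
    LinearMap.mul' ℤ FA ∘ₗ
      TensorProduct.map (LinearMap.mulRight ℤ av ∘ₗ lambdaMap.toLinearMap) LinearMap.id ∘ₗ Delta

lemma lambdaExpansion_apply (u : FA) :
    lambdaExpansion u = lambdaMap u + LinearMap.mul' ℤ FA
      (TensorProduct.map (LinearMap.mulRight ℤ av ∘ₗ lambdaMap.toLinearMap) LinearMap.id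
        (Delta u)) :=
  rfl

lemma lambdaExpansion_of_mul (x : Fin 2) (w : FreeMonoid (Fin 2)) :
    lambdaExpansion (ofW (FreeMonoid.of x * w)) =
      av * ofW w + lambdaMap (ofW (FreeMonoid.of x)) * lambdaExpansion (ofW w) := by
  rw [lambdaExpansion_apply, lambdaExpansion_apply, Delta_ofW, Delta_ofW, deltaWord_of_mul,
    map_add, map_add, mul'_map_mulRight_comp_map_mulLeft, ofW_of_mul, map_mul]
  simp only [TensorProduct.map_tmul, LinearMap.comp_apply, AlgHom.toLinearMap_apply, map_one,
    LinearMap.mulRight_apply, LinearMap.id_apply, LinearMap.mul'_apply, one_mul, mul_add]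
  abel

lemma lambdaExpansion_ofW (w : FreeMonoid (Fin 2)) : lambdaExpansion (ofW w) = ofW w := by
  induction w using FreeMonoid.inductionOn' with
  | one =>
    rw [lambdaExpansion_apply, Delta_ofW, deltaWord_one, map_zero, map_zero, add_zero,
      show ofW 1 = 1 from map_one _, map_one]
  | of_mul x w ih =>
    rw [lambdaExpansion_of_mul, ih, ← add_mul, av_add_lambdaMap_of, ofW_of_mul]

lemma lambdaExpansion_eq_id : lambdaExpansion = LinearMap.id := by
  refine MonoidAlgebra.lhom_ext' fun w => LinearMap.ext_ring ?_
  exact lambdaExpansion_ofW w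

/-- `u = λ(u) + Σ λ(u₍₁₎) · a · u₍₂₎`. -/
theorem lambda_identity (u : FA) :
    u = lambdaMap u +
      LinearMap.mul' ℤ FA
        (TensorProduct.map (LinearMap.mulRight ℤ av ∘ₗ lambdaMap.toLinearMap) LinearMap.id
          (Delta u)) :=
  (LinearMap.congr_fun lambdaExpansion_eq_id u).symm

end
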